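/- Propagation of Hölder exponents through the delay recursion: Let γ ∈ (0,1), h ∈ (0,1], δ ∈ (0,1], and suppose nonnegative reals E_0, E_1, …, E_n satisfy E_0 ≤ C(h^{1/2} + δ^γ) and E_{j+1} ≤ C(E_j + h^{1/2} + δ + E_j^γ) for 0 ≤ j < n, for some C ≥ 1. Then there exist constants C_1,…,C_n ≥ 0 (depending only on C, γ, n) such that E_j ≤ C_j ( Σ_{ℓ=0}^{j} h^{γ^ℓ/2} + Σ_{ℓ=0}^{j+1} δ^{γ^ℓ} ) for all 1 ≤ j ≤ n. -/

import Mathlib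

/-!
Set `T_j = h^{γ^j/2} + δ^{γ^{j+1}}`. By induction, `E_j ≤ K_j T_j` with `K_0 = C` and
`K_{j+1} = C (2 K_j + 2)`. In the inductive step each of the four terms of the recursion is at
most a multiple of `T_{j+1}`: `E_j ≤ K_j T_j ≤ K_j T_{j+1}` because the exponents `γ^j` decrease
and `h, δ ≤ 1`; `h^{1/2}, δ ≤ T_{j+1}` for the same reason; and the subadditivity
`(x + y)^γ ≤ x^γ + y^γ` gives `E_j^γ ≤ K_j^γ T_j^γ ≤ K_j T_{j+1}`. Finally `T_j` is one term of
each of the two sums in the conclusion.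
-/

open Real

noncomputable section

namespace HolderPropagation

def envelope (γ h δ : ℝ) (j : ℕ) : ℝ := h ^ (γ ^ j / 2) + δ ^ (γ ^ (j + 1))

def constant (C : ℝ) : ℕ → ℝ
  | 0 => C
  | j + 1 => C * (2 * constant C j + 2)

lemma one_le_constant {C : ℝ} (hC : 1 ≤ C) (j : ℕ) : 1 ≤ constant C j := by
  induction j with
  | zero => exact hC
  | succ j ih => simp only [constant]; nlinarith

variable {γ h δ : ℝ}

lemma envelope_nonneg (hh : 0 ≤ h) (hδ : 0 ≤ δ) (j : ℕ) : 0 ≤ envelope γ h δ j := by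
  unfold envelope; positivity

lemma envelope_le_succ (hγ0 : 0 ≤ γ) (hγ1 : γ ≤ 1) (hh0 : 0 < h) (hh1 : h ≤ 1)
    (hδ0 : 0 < δ) (hδ1 : δ ≤ 1) (j : ℕ) : envelope γ h δ j ≤ envelope γ h δ (j + 1) := by
  have hγpow (k : ℕ) : γ ^ (k + 1) ≤ γ ^ k := pow_le_pow_of_le_one hγ0 hγ1 k.le_succ
  exact add_le_add (rpow_le_rpow_of_exponent_ge hh0 hh1 (by linarith [hγpow j]))
    (rpow_le_rpow_of_exponent_ge hδ0 hδ1 (hγpow (j + 1)))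

lemma rpow_half_le_envelope (hγ0 : 0 ≤ γ) (hγ1 : γ ≤ 1) (hh0 : 0 < h) (hh1 : h ≤ 1)
    (hδ : 0 ≤ δ) (j : ℕ) : h ^ ((1 : ℝ) / 2) ≤ envelope γ h δ j := by
  have hγj : γ ^ j ≤ 1 := pow_le_one₀ hγ0 hγ1
  have hh : h ^ ((1 : ℝ) / 2) ≤ h ^ (γ ^ j / 2) :=
    rpow_le_rpow_of_exponent_ge hh0 hh1 (by linarith)
  unfold envelope
  linarith [rpow_nonneg hδ (γ ^ (j + 1))]

lemma le_envelope (hγ0 : 0 ≤ γ) (hγ1 : γ ≤ 1) (hh : 0 ≤ h) (hδ0 : 0 < δ) (hδ1 : δ ≤ 1)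
    (j : ℕ) : δ ≤ envelope γ h δ j := by
  have hδ : δ ^ (1 : ℝ) ≤ δ ^ (γ ^ (j + 1)) :=
    rpow_le_rpow_of_exponent_ge hδ0 hδ1 (pow_le_one₀ hγ0 hγ1)
  rw [rpow_one] at hδ
  unfold envelope
  linarith [rpow_nonneg hh (γ ^ j / 2)]

lemma envelope_rpow_le_succ (hγ0 : 0 ≤ γ) (hγ1 : γ ≤ 1) (hh : 0 ≤ h) (hδ : 0 ≤ δ) (j : ℕ) :
    envelope γ h δ j ^ γ ≤ envelope γ h δ (j + 1) := by
  have hh_pow : (h ^ (γ ^ j / 2)) ^ γ = h ^ (γ ^ (j + 1) / 2) := by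
    rw [← rpow_mul hh]; ring_nf
  have hδ_pow : (δ ^ (γ ^ (j + 1))) ^ γ = δ ^ (γ ^ (j + 2)) := by
    rw [← rpow_mul hδ]; ring_nf
  calc envelope γ h δ j ^ γ
      ≤ (h ^ (γ ^ j / 2)) ^ γ + (δ ^ (γ ^ (j + 1))) ^ γ :=
        rpow_add_le_add_rpow (by positivity) (by positivity) hγ0 hγ1
    _ = envelope γ h δ (j + 1) := by rw [hh_pow, hδ_pow]; rfl

lemma rpow_le_mul_rpow_of_le_mul {e K T : ℝ} (he : 0 ≤ e) (hK : 1 ≤ K) (hT : 0 ≤ T)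
    (hγ0 : 0 ≤ γ) (hγ1 : γ ≤ 1) (heKT : e ≤ K * T) : e ^ γ ≤ K * T ^ γ :=
  calc e ^ γ ≤ (K * T) ^ γ := rpow_le_rpow he heKT hγ0
    _ = K ^ γ * T ^ γ := mul_rpow (by linarith) hT
    _ ≤ K * T ^ γ := by gcongr; exact rpow_le_self_of_one_le hK hγ1

lemma le_constant_mul_envelope {C : ℝ} (hC : 1 ≤ C) (hγ0 : 0 ≤ γ) (hγ1 : γ ≤ 1)
    (hh0 : 0 < h) (hh1 : h ≤ 1) (hδ0 : 0 < δ) (hδ1 : δ ≤ 1) {n : ℕ} {E : ℕ → ℝ}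
    (hE : ∀ j, 0 ≤ E j) (hE0 : E 0 ≤ C * (h ^ ((1 : ℝ) / 2) + δ ^ γ))
    (hrec : ∀ j, j < n → E (j + 1) ≤ C * (E j + h ^ ((1 : ℝ) / 2) + δ + E j ^ γ)) :
    ∀ j ≤ n, E j ≤ constant C j * envelope γ h δ j := by
  intro j
  induction j with
  | zero => intro _; simpa [constant, envelope] using hE0
  | succ j ih =>
    intro hjn
    set T := envelope γ h δ (j + 1)
    have hEj := ih (by omega)
    have hKj := one_le_constant hC j
    have hT := envelope_le_succ hγ0 hγ1 hh0 hh1 hδ0 hδ1 j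
    have hEj_le : E j ≤ constant C j * T := hEj.trans (by gcongr)
    have hEjγ_le : E j ^ γ ≤ constant C j * T :=
      (rpow_le_mul_rpow_of_le_mul (hE j) hKj (envelope_nonneg hh0.le hδ0.le j) hγ0 hγ1
        hEj).trans (by gcongr; exact envelope_rpow_le_succ hγ0 hγ1 hh0.le hδ0.le j)
    calc E (j + 1) ≤ C * (E j + h ^ ((1 : ℝ) / 2) + δ + E j ^ γ) := hrec j hjn
      _ ≤ C * (constant C j * T + T + T + constant C j * T) := by
          gcongr
          · exact rpow_half_le_envelope hγ0 hγ1 hh0 hh1 hδ0.le (j + 1)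
          · exact le_envelope hγ0 hγ1 hh0.le hδ0 hδ1 (j + 1)
      _ = constant C (j + 1) * T := by simp only [constant]; ring

lemma envelope_le_sum (hh : 0 ≤ h) (hδ : 0 ≤ δ) (j : ℕ) :
    envelope γ h δ j ≤
      ∑ ℓ ∈ Finset.range (j + 1), h ^ (γ ^ ℓ / 2) + ∑ ℓ ∈ Finset.range (j + 2), δ ^ (γ ^ ℓ) := by
  unfold envelope
  gcongr
  · exact Finset.single_le_sum (f := fun ℓ => h ^ (γ ^ ℓ / 2))
      (fun ℓ _ => rpow_nonneg hh _) (Finset.self_mem_range_succ j)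
  · exact Finset.single_le_sum (f := fun ℓ => δ ^ (γ ^ ℓ))
      (fun ℓ _ => rpow_nonneg hδ _) (Finset.self_mem_range_succ (j + 1))

end HolderPropagation

end

open HolderPropagation in
theorem holder_exponent_propagation
    (γ : ℝ) (hγ0 : 0 < γ) (hγ1 : γ < 1) (n : ℕ) (C : ℝ) (hC : 1 ≤ C) :
    ∃ Cs : ℕ → ℝ, (∀ j, 0 ≤ Cs j) ∧
      ∀ h δ : ℝ, 0 < h → h ≤ 1 → 0 < δ → δ ≤ 1 →
      ∀ E : ℕ → ℝ, (∀ j, 0 ≤ E j) →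
        E 0 ≤ C * (h ^ ((1 : ℝ) / 2) + δ ^ γ) →
        (∀ j, j < n → E (j + 1) ≤ C * (E j + h ^ ((1 : ℝ) / 2) + δ + E j ^ γ)) →
        ∀ j, 1 ≤ j → j ≤ n →
          E j ≤ Cs j *
            (∑ ℓ ∈ Finset.range (j + 1), h ^ (γ ^ ℓ / 2) +
             ∑ ℓ ∈ Finset.range (j + 2), δ ^ (γ ^ ℓ)) := by
  refine ⟨constant C, fun j => zero_le_one.trans (one_le_constant hC j), ?_⟩
  intro h δ hh0 hh1 hδ0 hδ1 E hE hE0 hrec j _ hjn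
  calc E j ≤ constant C j * envelope γ h δ j :=
        le_constant_mul_envelope hC hγ0.le hγ1.le hh0 hh1 hδ0 hδ1 hE hE0 hrec j hjn
    _ ≤ _ := by
        gcongr
        · exact zero_le_one.trans (one_le_constant hC j)
        · exact envelope_le_sum hh0.le hδ0.le j
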